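/- Let S1 and S2 be finite presemifields of characteristic p with spread sets C1 and C2, and suppose (g1,g2,g3) is an isotopism between S1 and S2. Then: (1) N_r(C2) = g3 ∘ N_r(C1) ∘ g3⁻¹ := {g3∘μ∘g3⁻¹ : μ ∈ N_r(C1)}; (2) N_m(C2) = g1 ∘ N_m(C1) ∘ g1⁻¹; (3) N_r(C2^d) = g3 ∘ N_r(C1^d) ∘ g3⁻¹, where C1^d, C2^d are the spread sets of the dual presemifields. -/

import Mathlib

/-- A finite presemifield of characteristic `p`: a (nontrivial, finite) `ZMod p`-vector
space equipped with a multiplication that is additive (equivalently, `ZMod p`-linear)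
in each argument and has no zero divisors.  For `y : S`, the map `mul.flip y` is the
right-multiplication map `φ_y : x ↦ x ⋆ y`, so the spread set is `Set.range mul.flip`. -/
structure Presemifield (p : ℕ) (S : Type*) [AddCommGroup S] [Module (ZMod p) S] where
  mul : S →ₗ[ZMod p] S →ₗ[ZMod p] S
  eq_zero_or_eq_zero : ∀ x y : S, mul x y = 0 → x = 0 ∨ y = 0

/-- The spread set `C = {φ_y : y ∈ S}` of a presemifield. -/
def Presemifield.spread {p : ℕ} {S : Type*} [AddCommGroup S] [Module (ZMod p) S]
    (M : Presemifield p S) : Set (S →ₗ[ZMod p] S) :=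
  Set.range M.mul.flip

/-- The spread set `C^d = {φ^x : x ∈ S}` of the dual presemifield (`x ⋆^d y = y ⋆ x`). -/
def Presemifield.dualSpread {p : ℕ} {S : Type*} [AddCommGroup S] [Module (ZMod p) S]
    (M : Presemifield p S) : Set (S →ₗ[ZMod p] S) :=
  Set.range M.mul

/-- The right-nucleus set `N_r(D) = {μ : μ∘φ ∈ D for all φ ∈ D}`. -/
def rightNucleusSet {p : ℕ} {S : Type*} [AddCommGroup S] [Module (ZMod p) S]
    (D : Set (S →ₗ[ZMod p] S)) : Set (S →ₗ[ZMod p] S) :=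
  {μ | ∀ φ ∈ D, μ ∘ₗ φ ∈ D}

/-- The middle-nucleus set `N_m(D) = {μ : φ∘μ ∈ D for all φ ∈ D}`. -/
def middleNucleusSet {p : ℕ} {S : Type*} [AddCommGroup S] [Module (ZMod p) S]
    (D : Set (S →ₗ[ZMod p] S)) : Set (S →ₗ[ZMod p] S) :=
  {μ | ∀ φ ∈ D, φ ∘ₗ μ ∈ D}

/-
The isotopism identity `g1 x ⋆ g2 y = g3 (x • y)` says exactly that
`φ_{g2 y} = g3 ∘ φ_y ∘ g1⁻¹` and `φ^{g1 x} = g3 ∘ φ^x ∘ g2⁻¹`, i.e. the spread sets of `S2` are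
images of those of `S1` under the maps `φ ↦ e ∘ φ ∘ f⁻¹`. Since
`(e μ e⁻¹) ∘ (e φ f⁻¹) = e (μ φ) f⁻¹` and `(e φ f⁻¹) ∘ (f μ f⁻¹) = e (φ μ) f⁻¹`, such a map carries
the right nucleus set to its conjugate by `e` and the middle nucleus set to its conjugate by `f`.
-/

lemma Set.eq_image_of_forall_mem_iff {α β : Type*} {f : α → β} (hf : Function.Bijective f)
    {s : Set α} {t : Set β} (h : ∀ a, f a ∈ t ↔ a ∈ s) : t = f '' s := by
  ext b
  obtain ⟨a, rfl⟩ := hf.2 b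
  rw [hf.1.mem_set_image, h]

namespace LinearEquiv

variable {R M N : Type*} [CommSemiring R] [AddCommMonoid M] [Module R M]
  [AddCommMonoid N] [Module R N]

lemma conj_comp_arrowCongr (e f : M ≃ₗ[R] N) (μ φ : Module.End R M) :
    e.conj μ ∘ₗ arrowCongr f e φ = arrowCongr f e (μ ∘ₗ φ) :=
  (arrowCongr_comp f e e φ μ).symm

lemma arrowCongr_comp_conj (e f : M ≃ₗ[R] N) (φ μ : Module.End R M) :
    arrowCongr f e φ ∘ₗ f.conj μ = arrowCongr f e (φ ∘ₗ μ) :=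
  (arrowCongr_comp f f e μ φ).symm

end LinearEquiv

open LinearEquiv

section NucleusSet

variable {p : ℕ} {S1 S2 : Type*} [AddCommGroup S1] [Module (ZMod p) S1]
  [AddCommGroup S2] [Module (ZMod p) S2]

lemma rightNucleusSet_image_arrowCongr (e f : S1 ≃ₗ[ZMod p] S2)
    (D : Set (Module.End (ZMod p) S1)) :
    rightNucleusSet (arrowCongr f e '' D) = e.conj '' rightNucleusSet D := by
  refine Set.eq_image_of_forall_mem_iff e.conj.bijective fun μ => ?_
  simp only [rightNucleusSet, Set.mem_ofPred_eq, Set.forall_mem_image, conj_comp_arrowCongr,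
    (arrowCongr f e).injective.mem_set_image]

lemma middleNucleusSet_image_arrowCongr (e f : S1 ≃ₗ[ZMod p] S2)
    (D : Set (Module.End (ZMod p) S1)) :
    middleNucleusSet (arrowCongr f e '' D) = f.conj '' middleNucleusSet D := by
  refine Set.eq_image_of_forall_mem_iff f.conj.bijective fun μ => ?_
  simp only [middleNucleusSet, Set.mem_ofPred_eq, Set.forall_mem_image, arrowCongr_comp_conj,
    (arrowCongr f e).injective.mem_set_image]

end NucleusSet

namespace Presemifield

variable {p : ℕ} {S1 S2 : Type*} [AddCommGroup S1] [Module (ZMod p) S1]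
  [AddCommGroup S2] [Module (ZMod p) S2] {M1 : Presemifield p S1} {M2 : Presemifield p S2}
  {g1 g2 g3 : S1 ≃ₗ[ZMod p] S2}

lemma spread_eq_image_arrowCongr (hiso : ∀ x y, M2.mul (g1 x) (g2 y) = g3 (M1.mul x y)) :
    M2.spread = arrowCongr g1 g3 '' M1.spread := by
  have hφ : ∀ y, M2.mul.flip (g2 y) = arrowCongr g1 g3 (M1.mul.flip y) := fun y => by
    ext x
    simpa using hiso (g1.symm x) y
  rw [spread, spread, ← Set.range_comp, ← g2.surjective.range_comp]
  exact congrArg Set.range (funext hφ)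

lemma dualSpread_eq_image_arrowCongr (hiso : ∀ x y, M2.mul (g1 x) (g2 y) = g3 (M1.mul x y)) :
    M2.dualSpread = arrowCongr g2 g3 '' M1.dualSpread := by
  have hφ : ∀ x, M2.mul (g1 x) = arrowCongr g2 g3 (M1.mul x) := fun x => by
    ext y
    simpa using hiso x (g2.symm y)
  rw [dualSpread, dualSpread, ← Set.range_comp, ← g1.surjective.range_comp]
  exact congrArg Set.range (funext hφ)

end Presemifield

theorem statement5_general (p : ℕ)
    (S1 S2 : Type*) [AddCommGroup S1] [Module (ZMod p) S1]
    [AddCommGroup S2] [Module (ZMod p) S2]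
    (M1 : Presemifield p S1) (M2 : Presemifield p S2)
    (g1 g2 g3 : S1 ≃ₗ[ZMod p] S2)
    (hiso : ∀ x y : S1, M2.mul (g1 x) (g2 y) = g3 (M1.mul x y)) :
    rightNucleusSet M2.spread =
      (fun μ : S1 →ₗ[ZMod p] S1 =>
          (g3 : S1 →ₗ[ZMod p] S2) ∘ₗ μ ∘ₗ (g3.symm : S2 →ₗ[ZMod p] S1)) ''
        rightNucleusSet M1.spread ∧
    middleNucleusSet M2.spread =
      (fun μ : S1 →ₗ[ZMod p] S1 =>
          (g1 : S1 →ₗ[ZMod p] S2) ∘ₗ μ ∘ₗ (g1.symm : S2 →ₗ[ZMod p] S1)) ''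
        middleNucleusSet M1.spread ∧
    rightNucleusSet M2.dualSpread =
      (fun μ : S1 →ₗ[ZMod p] S1 =>
          (g3 : S1 →ₗ[ZMod p] S2) ∘ₗ μ ∘ₗ (g3.symm : S2 →ₗ[ZMod p] S1)) ''
        rightNucleusSet M1.dualSpread := by
  rw [Presemifield.spread_eq_image_arrowCongr hiso,
    Presemifield.dualSpread_eq_image_arrowCongr hiso, rightNucleusSet_image_arrowCongr,
    middleNucleusSet_image_arrowCongr, rightNucleusSet_image_arrowCongr]
  exact ⟨rfl, rfl, rfl⟩

theorem statement5 (p : ℕ) [Fact p.Prime]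
    (S1 S2 : Type*) [AddCommGroup S1] [Module (ZMod p) S1] [Finite S1] [Nontrivial S1]
    [AddCommGroup S2] [Module (ZMod p) S2] [Finite S2] [Nontrivial S2]
    (M1 : Presemifield p S1) (M2 : Presemifield p S2)
    (g1 g2 g3 : S1 ≃ₗ[ZMod p] S2)
    (hiso : ∀ x y : S1, M2.mul (g1 x) (g2 y) = g3 (M1.mul x y)) :
    rightNucleusSet M2.spread =
      (fun μ : S1 →ₗ[ZMod p] S1 =>
          (g3 : S1 →ₗ[ZMod p] S2) ∘ₗ μ ∘ₗ (g3.symm : S2 →ₗ[ZMod p] S1)) ''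
        rightNucleusSet M1.spread ∧
    middleNucleusSet M2.spread =
      (fun μ : S1 →ₗ[ZMod p] S1 =>
          (g1 : S1 →ₗ[ZMod p] S2) ∘ₗ μ ∘ₗ (g1.symm : S2 →ₗ[ZMod p] S1)) ''
        middleNucleusSet M1.spread ∧
    rightNucleusSet M2.dualSpread =
      (fun μ : S1 →ₗ[ZMod p] S1 =>
          (g3 : S1 →ₗ[ZMod p] S2) ∘ₗ μ ∘ₗ (g3.symm : S2 →ₗ[ZMod p] S1)) ''
        rightNucleusSet M1.dualSpread :=
  statement5_general p S1 S2 M1 M2 g1 g2 g3 hiso
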